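/- arXiv:2402.18358 — 3 statements merged into one kernel-verified Lean document; each statement's English description precedes it below -/
import Mathlib

section
/- Let δ, ε be real and κ a nonzero real number, and let H(X,Y) = (δ/2)(X²+Y²) + (Ω₂/8)(X²+Y²)² + (A/4)(X⁴ − 6X²Y² + Y⁴) + (ε/2)X with Ω₂ = −(1+3κ)/8 and A = (1−κ)/16. A point (X,Y) with Y ≠ 0 is a critical point of H if and only if Y² = (4δ − X²)/κ and X satisfies the cubic equation −((κ²−1)/(4κ))X³ + (δ(κ−1)/κ)X + ε/2 = 0. -/
/-!
With `Ω₂ = -(1 + 3κ)/8` and `A = (1 - κ)/16` the partial derivatives of `H` are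
`∂H/∂X = δX - X(κX² + Y²)/4 + ε/2` and `∂H/∂Y = Y(4δ - X² - κY²)/4`. Off the axis `Y = 0` the
second vanishes exactly when `κY² = 4δ - X²`, and substituting this into the first gives the cubic.
-/

noncomputable def resonantHamiltonian (δ Ω₂ A ε X Y : ℝ) : ℝ :=
  δ / 2 * (X ^ 2 + Y ^ 2) + Ω₂ / 8 * (X ^ 2 + Y ^ 2) ^ 2 +
    A / 4 * (X ^ 4 - 6 * X ^ 2 * Y ^ 2 + Y ^ 4) + ε / 2 * X

section
variable (δ Ω₂ A ε X Y : ℝ)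

theorem hasDerivAt_resonantHamiltonian_fst :
    HasDerivAt (resonantHamiltonian δ Ω₂ A ε · Y)
      (δ * X + Ω₂ / 2 * (X ^ 2 + Y ^ 2) * X + A * (X ^ 3 - 3 * X * Y ^ 2) + ε / 2) X := by
  have hr : HasDerivAt (fun x => x ^ 2 + Y ^ 2) (2 * X) X :=
    ((hasDerivAt_pow 2 X).add_const _).congr_deriv (by ring)
  have hq : HasDerivAt (fun x => x ^ 4 - 6 * x ^ 2 * Y ^ 2 + Y ^ 4) (4 * X ^ 3 - 12 * X * Y ^ 2) X :=
    (((hasDerivAt_pow 4 X).sub (((hasDerivAt_pow 2 X).const_mul 6).mul_const (Y ^ 2))).add_const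
      _).congr_deriv (by ring)
  exact ((((hr.const_mul (δ / 2)).add ((hr.pow 2).const_mul (Ω₂ / 8))).add
    (hq.const_mul (A / 4))).add ((hasDerivAt_id X).const_mul (ε / 2))).congr_deriv (by ring)

theorem hasDerivAt_resonantHamiltonian_snd :
    HasDerivAt (resonantHamiltonian δ Ω₂ A ε X ·)
      (δ * Y + Ω₂ / 2 * (X ^ 2 + Y ^ 2) * Y + A * (Y ^ 3 - 3 * X ^ 2 * Y)) Y := by
  have hr : HasDerivAt (fun y => X ^ 2 + y ^ 2) (2 * Y) Y :=
    ((hasDerivAt_pow 2 Y).const_add _).congr_deriv (by ring)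
  have hq : HasDerivAt (fun y => X ^ 4 - 6 * X ^ 2 * y ^ 2 + y ^ 4) (4 * Y ^ 3 - 12 * X ^ 2 * Y) Y :=
    ((((hasDerivAt_pow 2 Y).const_mul (6 * X ^ 2)).const_sub (X ^ 4)).add
      (hasDerivAt_pow 4 Y)).congr_deriv (by ring)
  exact ((((hr.const_mul (δ / 2)).add ((hr.pow 2).const_mul (Ω₂ / 8))).add
    (hq.const_mul (A / 4))).add_const (ε / 2 * X)).congr_deriv (by ring)
end

theorem critical_equations_iff_cubic {δ ε κ X Y : ℝ} (hκ : κ ≠ 0) (hY : Y ≠ 0) :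
    (δ * X - X * (κ * X ^ 2 + Y ^ 2) / 4 + ε / 2 = 0 ∧ Y * (4 * δ - X ^ 2 - κ * Y ^ 2) / 4 = 0) ↔
      (Y ^ 2 = (4 * δ - X ^ 2) / κ ∧
        -((κ ^ 2 - 1) / (4 * κ)) * X ^ 3 + δ * (κ - 1) / κ * X + ε / 2 = 0) := by
  have hsnd : Y * (4 * δ - X ^ 2 - κ * Y ^ 2) / 4 = 0 ↔ Y ^ 2 = (4 * δ - X ^ 2) / κ := by
    rw [mul_div_assoc, mul_eq_zero, or_iff_right hY, div_eq_zero_iff, or_iff_left four_ne_zero,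
      eq_div_iff hκ]
    constructor <;> intro h <;> linear_combination -h
  rw [and_comm, hsnd]
  refine and_congr_right fun hY2 => Eq.congr_left ?_
  rw [hY2]
  field_simp
  ring

/-- For κ ≠ 0, a point (X,Y) with Y ≠ 0 is a critical point of the planar
    Hamiltonian H if and only if Y² = (4δ − X²)/κ and X satisfies the cubic
    −((κ²−1)/(4κ))X³ + (δ(κ−1)/κ)X + ε/2 = 0. -/
theorem stmt_4 (δ ε κ Ω₂ A : ℝ) (hκ : κ ≠ 0)
    (hΩ₂ : Ω₂ = -(1 + 3 * κ) / 8) (hA : A = (1 - κ) / 16)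
    (H : ℝ → ℝ → ℝ)
    (hH : ∀ X Y : ℝ, H X Y =
      δ / 2 * (X ^ 2 + Y ^ 2) + Ω₂ / 8 * (X ^ 2 + Y ^ 2) ^ 2 +
        A / 4 * (X ^ 4 - 6 * X ^ 2 * Y ^ 2 + Y ^ 4) + ε / 2 * X)
    (X Y : ℝ) (hY : Y ≠ 0) :
    (deriv (fun x : ℝ => H x Y) X = 0 ∧ deriv (fun y : ℝ => H X y) Y = 0) ↔
      (Y ^ 2 = (4 * δ - X ^ 2) / κ ∧
        -((κ ^ 2 - 1) / (4 * κ)) * X ^ 3 + δ * (κ - 1) / κ * X + ε / 2 = 0) := by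
  obtain rfl : H = resonantHamiltonian δ Ω₂ A ε := funext fun X => funext (hH X)
  subst hΩ₂ hA
  rw [(hasDerivAt_resonantHamiltonian_fst ..).deriv, (hasDerivAt_resonantHamiltonian_snd ..).deriv,
    ← critical_equations_iff_cubic hκ hY]
  apply and_congr <;> apply Eq.congr_left <;> ring
end

section
/- Let 0 < κ < 1 and ε > 0 be real numbers, and let Q(X) = −((κ²−1)/(4κ))X³ + (δ(κ−1)/κ)X + ε/2. If δ > (3/4)[κ²(κ+1)/(κ−1)²]^{1/3} ε^{2/3}, then Q has exactly three distinct real roots; if δ < (3/4)[κ²(κ+1)/(κ−1)²]^{1/3} ε^{2/3}, then Q has exactly one real root. -/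
/-!
Dividing by the leading coefficient turns `Q` into the depressed cubic `x³ + p x + q` with
`p = -4δ/(1+κ)` and `q = 2κε/(1-κ²)`, whose discriminant `-(4p³ + 27q²)` is a positive multiple of
`δ³ - δ̂₂³ ε²`. A depressed cubic with negative discriminant has one real root: two distinct roots
`x, y` force `4p³ + 27q² = -((x-y)(x+2y)(2x+y))² ≤ 0`. With positive discriminant, `p < 0` and the
cubic changes sign at `±√(-p/3)`, giving three roots by the intermediate value theorem, and there
are no more since any three distinct roots sum to zero.
-/

open Set

section DepressedCubic

variable {p q : ℝ}

lemma sq_add_mul_add_sq_add_eq_zero_of_cubic {x y : ℝ} (hx : x ^ 3 + p * x + q = 0)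
    (hy : y ^ 3 + p * y + q = 0) (hxy : x ≠ y) : x ^ 2 + x * y + y ^ 2 + p = 0 := by
  have h : (x - y) * (x ^ 2 + x * y + y ^ 2 + p) = 0 := by linear_combination hx - hy
  exact (mul_eq_zero_iff_left (sub_ne_zero.mpr hxy)).mp h

lemma eq_of_cubic_of_discr_pos (hd : 0 < 4 * p ^ 3 + 27 * q ^ 2) {x y : ℝ}
    (hx : x ^ 3 + p * x + q = 0) (hy : y ^ 3 + p * y + q = 0) : x = y := by
  by_contra hxy
  have hxy' := sq_add_mul_add_sq_add_eq_zero_of_cubic hx hy hxy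
  have hp : p = -(x ^ 2 + x * y + y ^ 2) := by linarith
  have hq : q = x ^ 2 * y + x * y ^ 2 := by linear_combination hx - x * hxy'
  have hdiscr : 4 * p ^ 3 + 27 * q ^ 2 = -((x - y) * (x + 2 * y) * (2 * x + y)) ^ 2 := by
    rw [hp, hq]; ring
  rw [hdiscr] at hd
  linarith [sq_nonneg ((x - y) * (x + 2 * y) * (2 * x + y))]

lemma add_add_eq_zero_of_cubic {x y z : ℝ} (hx : x ^ 3 + p * x + q = 0)
    (hy : y ^ 3 + p * y + q = 0) (hz : z ^ 3 + p * z + q = 0) (hxy : x ≠ y) (hxz : x ≠ z)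
    (hyz : y ≠ z) : x + y + z = 0 := by
  have h : (y - z) * (x + y + z) = 0 := by
    linear_combination sq_add_mul_add_sq_add_eq_zero_of_cubic hx hy hxy -
      sq_add_mul_add_sq_add_eq_zero_of_cubic hx hz hxz
  exact (mul_eq_zero_iff_left (sub_ne_zero.mpr hyz)).mp h

lemma cubic_pos_of_bound (p q : ℝ) :
    0 < (1 + |p| + |q|) ^ 3 + p * (1 + |p| + |q|) + q := by
  set A := 1 + |p| + |q|
  have hA : 1 ≤ A := by linarith [abs_nonneg p, abs_nonneg q]
  have hpA : -|p| * A ≤ p * A := mul_le_mul_of_nonneg_right (neg_abs_le p) (by linarith)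
  calc 0 < 1 := one_pos
    _ ≤ A * (A - |p| - |q|) := by nlinarith
    _ ≤ A * (A ^ 2 - |p|) - |q| := by nlinarith [abs_nonneg q]
    _ ≤ A ^ 3 + p * A + q := by nlinarith [neg_abs_le q]

lemma cubic_neg_of_bound (p q : ℝ) :
    (-(1 + |p| + |q|)) ^ 3 + p * -(1 + |p| + |q|) + q < 0 := by
  have := cubic_pos_of_bound p (-q)
  rw [abs_neg] at this
  linarith

lemma exists_cubic_eq_zero_of_lt_of_lt {a b : ℝ} (hab : a ≤ b) (ha : a ^ 3 + p * a + q < 0)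
    (hb : 0 < b ^ 3 + p * b + q) : ∃ x ∈ Ioo a b, x ^ 3 + p * x + q = 0 :=
  intermediate_value_Ioo hab (by fun_prop) ⟨ha, hb⟩

lemma exists_cubic_eq_zero_of_gt_of_gt {a b : ℝ} (hab : a ≤ b) (ha : 0 < a ^ 3 + p * a + q)
    (hb : b ^ 3 + p * b + q < 0) : ∃ x ∈ Ioo a b, x ^ 3 + p * x + q = 0 :=
  intermediate_value_Ioo' hab (by fun_prop) ⟨hb, ha⟩

lemma ncard_setOf_cubic_eq_one (hd : 0 < 4 * p ^ 3 + 27 * q ^ 2) :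
    {x : ℝ | x ^ 3 + p * x + q = 0}.ncard = 1 := by
  obtain ⟨r, -, hr⟩ := exists_cubic_eq_zero_of_lt_of_lt (by linarith [abs_nonneg p, abs_nonneg q])
    (cubic_neg_of_bound p q) (cubic_pos_of_bound p q)
  exact ncard_eq_one.mpr ⟨r, eq_singleton_iff_unique_mem.mpr
    ⟨hr, fun y hy => eq_of_cubic_of_discr_pos hd hy hr⟩⟩

lemma ncard_setOf_cubic_eq_three (hd : 4 * p ^ 3 + 27 * q ^ 2 < 0) :
    {x : ℝ | x ^ 3 + p * x + q = 0}.ncard = 3 := by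
  have hp : p < 0 := by nlinarith [sq_nonneg q, sq_nonneg p]
  set m := √(-p / 3)
  have hm0 : 0 < m := Real.sqrt_pos.mpr (by linarith)
  have hpm : p = -3 * m ^ 2 := by rw [Real.sq_sqrt (by linarith)]; ring
  have hq_sq : q ^ 2 < (2 * m ^ 3) ^ 2 := by rw [hpm] at hd; nlinarith
  have hqm := abs_lt_of_sq_lt_sq' hq_sq (by positivity)
  set A := 1 + |p| + |q|
  have hmA : m < A := by nlinarith [abs_nonneg q, neg_abs_le p]
  have hf_neg_m : 0 < (-m) ^ 3 + p * -m + q := by rw [hpm]; nlinarith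
  have hf_m : m ^ 3 + p * m + q < 0 := by rw [hpm]; nlinarith
  obtain ⟨r₁, hr₁m, hr₁⟩ := exists_cubic_eq_zero_of_lt_of_lt (by linarith : -A ≤ -m)
    (cubic_neg_of_bound p q) hf_neg_m
  obtain ⟨r₂, hr₂m, hr₂⟩ := exists_cubic_eq_zero_of_gt_of_gt (by linarith : -m ≤ m) hf_neg_m hf_m
  obtain ⟨r₃, hr₃m, hr₃⟩ := exists_cubic_eq_zero_of_lt_of_lt hmA.le hf_m (cubic_pos_of_bound p q)
  have h₁₂ : r₁ ≠ r₂ := by linarith [hr₁m.2, hr₂m.1]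
  have h₁₃ : r₁ ≠ r₃ := by linarith [hr₁m.2, hr₃m.1]
  have h₂₃ : r₂ ≠ r₃ := by linarith [hr₂m.2, hr₃m.1]
  refine ncard_eq_three.mpr ⟨r₁, r₂, r₃, h₁₂, h₁₃, h₂₃, Set.ext fun x => ⟨fun hx => ?_, ?_⟩⟩
  · simp only [mem_insert_iff, mem_singleton_iff]
    by_contra! hx'
    obtain ⟨hx₁, hx₂, hx₃⟩ := hx'
    have := add_add_eq_zero_of_cubic hx hr₁ hr₂ hx₁ hx₂ h₁₂
    have := add_add_eq_zero_of_cubic hx hr₁ hr₃ hx₁ hx₃ h₁₃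
    exact h₂₃ (by linarith)
  · rintro (rfl | rfl | rfl)
    exacts [hr₁, hr₂, hr₃]

end DepressedCubic

lemma rpow_one_third_mul_rpow_two_thirds_pow_three {a b : ℝ} (ha : 0 ≤ a) (hb : 0 ≤ b) :
    (a ^ ((1 : ℝ) / 3) * b ^ ((2 : ℝ) / 3)) ^ 3 = a * b ^ 2 := by
  rw [mul_pow, ← Real.rpow_natCast, ← Real.rpow_natCast (b ^ _), ← Real.rpow_mul ha,
    ← Real.rpow_mul hb]
  norm_num

section ResonantCubic

variable {κ : ℝ}

lemma resonantCubic_eq_mul (hκ0 : κ ≠ 0) (hκ1 : 1 + κ ≠ 0) (hκ2 : 1 - κ ^ 2 ≠ 0) (δ ε X : ℝ) :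
    -((κ ^ 2 - 1) / (4 * κ)) * X ^ 3 + δ * (κ - 1) / κ * X + ε / 2 =
      (1 - κ ^ 2) / (4 * κ) * (X ^ 3 + -4 * δ / (1 + κ) * X + 2 * κ * ε / (1 - κ ^ 2)) := by
  field_simp
  ring

lemma resonantCubic_discr (hκ1 : 1 + κ ≠ 0) (hκ2 : 1 - κ ≠ 0) (δ ε : ℝ) :
    4 * (-4 * δ / (1 + κ)) ^ 3 + 27 * (2 * κ * ε / (1 - κ ^ 2)) ^ 2 =
      256 / (1 + κ) ^ 3 * (27 / 64 * (κ ^ 2 * (κ + 1) / (κ - 1) ^ 2) * ε ^ 2 - δ ^ 3) := by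
  have hκ2' : κ - 1 ≠ 0 := fun h => hκ2 (by linarith)
  have hκ3 : 1 - κ ^ 2 = (1 - κ) * (1 + κ) := by ring
  rw [hκ3]
  field_simp
  ring

end ResonantCubic

/-- For 0 < κ < 1 and ε > 0, the cubic Q(X) = −((κ²−1)/(4κ))X³ + (δ(κ−1)/κ)X + ε/2
    has exactly three distinct real roots if δ > (3/4)[κ²(κ+1)/(κ−1)²]^{1/3} ε^{2/3},
    and exactly one real root if δ < (3/4)[κ²(κ+1)/(κ−1)²]^{1/3} ε^{2/3}. -/
theorem stmt_5 (κ ε δ : ℝ) (hκ0 : 0 < κ) (hκ1 : κ < 1) (hε : 0 < ε) :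
    (δ > (3 / 4) * (κ ^ 2 * (κ + 1) / (κ - 1) ^ 2) ^ ((1 : ℝ) / 3) * ε ^ ((2 : ℝ) / 3) →
      {X : ℝ | -((κ ^ 2 - 1) / (4 * κ)) * X ^ 3 + δ * (κ - 1) / κ * X + ε / 2 = 0}.ncard = 3) ∧
    (δ < (3 / 4) * (κ ^ 2 * (κ + 1) / (κ - 1) ^ 2) ^ ((1 : ℝ) / 3) * ε ^ ((2 : ℝ) / 3) →
      {X : ℝ | -((κ ^ 2 - 1) / (4 * κ)) * X ^ 3 + δ * (κ - 1) / κ * X + ε / 2 = 0}.ncard = 1) := by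
  have hκ2 : 0 < 1 - κ ^ 2 := by nlinarith
  have hroots : {X : ℝ | -((κ ^ 2 - 1) / (4 * κ)) * X ^ 3 + δ * (κ - 1) / κ * X + ε / 2 = 0} =
      {x : ℝ | x ^ 3 + -4 * δ / (1 + κ) * x + 2 * κ * ε / (1 - κ ^ 2) = 0} := by
    ext X
    change _ = 0 ↔ _ = 0
    rw [resonantCubic_eq_mul hκ0.ne' (by linarith) hκ2.ne', mul_eq_zero_iff_left (by positivity)]
  have hthreshold : ((3 / 4) * (κ ^ 2 * (κ + 1) / (κ - 1) ^ 2) ^ ((1 : ℝ) / 3) *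
      ε ^ ((2 : ℝ) / 3)) ^ 3 = 27 / 64 * (κ ^ 2 * (κ + 1) / (κ - 1) ^ 2) * ε ^ 2 := by
    rw [mul_assoc, mul_pow, rpow_one_third_mul_rpow_two_thirds_pow_three (by positivity) hε.le]
    ring
  have hcube : Odd 3 := by decide
  have hscale : (0 : ℝ) < 256 / (1 + κ) ^ 3 := by positivity
  rw [hroots]
  refine ⟨fun hδ => ncard_setOf_cubic_eq_three ?_, fun hδ => ncard_setOf_cubic_eq_one ?_⟩
  all_goals rw [resonantCubic_discr (by linarith) (by linarith)]
  · exact mul_neg_of_pos_of_neg hscale (sub_neg.mpr (hthreshold ▸ hcube.pow_lt_pow.mpr hδ))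
  · exact mul_pos hscale (sub_pos.mpr (hthreshold ▸ hcube.pow_lt_pow.mpr hδ))
end

section
/- Let 0 < κ < 1 and let δ, ε be real numbers. Then the planar Hamiltonian H(X,Y) = (δ/2)(X²+Y²) + (Ω₂/8)(X²+Y²)² + (A/4)(X⁴ − 6X²Y² + Y⁴) + (ε/2)X, with Ω₂ = −(1+3κ)/8 and A = (1−κ)/16, has at most six critical points (X,Y) with Y ≠ 0. -/
/-! Away from `Y = 0`, the equation `∂H/∂Y = Y · (δ - (X² + κY²)/4) = 0` gives `κY² = 4δ - X²`;
substituting this into `∂H/∂X = 0` leaves a cubic in `X` with leading coefficient `1 - κ²`. So there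
are at most three abscissae, and over each of them `Y² = (4δ - X²)/κ` leaves at most two values
of `Y`. -/

open Polynomial

theorem exists_finset_card_le_two_mul_natDegree_of_sq_eq {p : ℝ[X]} (hp : p ≠ 0) (g : ℝ → ℝ) :
    ∃ S : Finset (ℝ × ℝ), S.card ≤ 2 * p.natDegree ∧
      ∀ q : ℝ × ℝ, p.IsRoot q.1 → q.2 ^ 2 = g q.1 → q ∈ S := by
  refine ⟨p.roots.toFinset.biUnion fun x => {(x, √(g x)), (x, -√(g x))}, ?_, ?_⟩
  · calc _ ≤ ∑ _ ∈ p.roots.toFinset, 2 :=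
          Finset.card_biUnion_le.trans <| Finset.sum_le_sum fun _ _ => Finset.card_le_two
      _ = 2 * p.roots.toFinset.card := by rw [Finset.sum_const, smul_eq_mul, mul_comm]
      _ ≤ 2 * p.natDegree :=
          Nat.mul_le_mul_left 2 (p.roots.toFinset_card_le.trans p.card_roots')
  · rintro ⟨x, y⟩ hx hy
    have hsqrt : √(g x) = |y| := by rw [← hy, Real.sqrt_sq_eq_abs]
    simp only [Finset.mem_biUnion, Multiset.mem_toFinset, mem_roots hp, Finset.mem_insert,
      Finset.mem_singleton, Prod.mk.injEq]
    refine ⟨x, hx, ?_⟩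
    rw [hsqrt]
    rcases abs_choice y with h | h <;> simp [h]

noncomputable def hamiltonian (δ ε Ω₂ A X Y : ℝ) : ℝ :=
  δ / 2 * (X ^ 2 + Y ^ 2) + Ω₂ / 8 * (X ^ 2 + Y ^ 2) ^ 2 +
    A / 4 * (X ^ 4 - 6 * X ^ 2 * Y ^ 2 + Y ^ 4) + ε / 2 * X

section Hamiltonian

variable (δ ε Ω₂ A : ℝ)

theorem hasDerivAt_hamiltonian_fst (X Y : ℝ) :
    HasDerivAt (fun x => hamiltonian δ ε Ω₂ A x Y)
      (δ * X + Ω₂ / 2 * (X ^ 2 + Y ^ 2) * X + A * (X ^ 3 - 3 * X * Y ^ 2) + ε / 2) X := by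
  have h := (((((hasDerivAt_pow 2 X).add_const (Y ^ 2)).const_mul (δ / 2)).add
      ((((hasDerivAt_pow 2 X).add_const (Y ^ 2)).pow 2).const_mul (Ω₂ / 8))).add
      ((((hasDerivAt_pow 4 X).sub
        (((hasDerivAt_pow 2 X).const_mul 6).mul_const (Y ^ 2))).add_const (Y ^ 4)).const_mul
        (A / 4))).add ((hasDerivAt_id X).const_mul (ε / 2))
  exact h.congr_deriv (by push_cast; ring)

theorem hasDerivAt_hamiltonian_snd (X Y : ℝ) :
    HasDerivAt (fun y => hamiltonian δ ε Ω₂ A X y)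
      (Y * (δ + Ω₂ / 2 * (X ^ 2 + Y ^ 2) + A * (Y ^ 2 - 3 * X ^ 2))) Y := by
  have h := (((((hasDerivAt_pow 2 Y).const_add (X ^ 2)).const_mul (δ / 2)).add
      ((((hasDerivAt_pow 2 Y).const_add (X ^ 2)).pow 2).const_mul (Ω₂ / 8))).add
      (((((hasDerivAt_pow 2 Y).const_mul (6 * X ^ 2)).const_sub (X ^ 4)).add
        (hasDerivAt_pow 4 Y)).const_mul (A / 4))).add_const (ε / 2 * X)
  exact h.congr_deriv (by push_cast; ring)

end Hamiltonian

/-- `4κ · ∂H/∂X` after eliminating `κY² = 4δ - X²`. -/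
noncomputable def criticalCubic (δ ε κ : ℝ) : ℝ[X] :=
  C (1 - κ ^ 2) * X ^ 3 + C (4 * δ * (κ - 1)) * X + C (2 * κ * ε)

theorem natDegree_criticalCubic (δ ε : ℝ) {κ : ℝ} (hκ : κ ^ 2 ≠ 1) :
    (criticalCubic δ ε κ).natDegree = 3 := by
  have : 1 - κ ^ 2 ≠ 0 := sub_ne_zero.2 hκ.symm
  unfold criticalCubic
  compute_degree!

theorem criticalCubic_ne_zero (δ ε : ℝ) {κ : ℝ} (hκ : κ ^ 2 ≠ 1) : criticalCubic δ ε κ ≠ 0 :=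
  ne_zero_of_natDegree_gt (n := 0) (by rw [natDegree_criticalCubic δ ε hκ]; norm_num)

theorem criticalCubic_isRoot_and_sq_eq_of_deriv_eq_zero {δ ε κ X Y : ℝ} (hκ : κ ≠ 0) (hY : Y ≠ 0)
    (hX' : deriv (fun x => hamiltonian δ ε (-(1 + 3 * κ) / 8) ((1 - κ) / 16) x Y) X = 0)
    (hY' : deriv (fun y => hamiltonian δ ε (-(1 + 3 * κ) / 8) ((1 - κ) / 16) X y) Y = 0) :
    (criticalCubic δ ε κ).IsRoot X ∧ Y ^ 2 = (4 * δ - X ^ 2) / κ := by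
  rw [(hasDerivAt_hamiltonian_fst ..).deriv] at hX'
  rw [(hasDerivAt_hamiltonian_snd ..).deriv, mul_eq_zero, or_iff_right hY] at hY'
  have hY2 : κ * Y ^ 2 = 4 * δ - X ^ 2 := by linear_combination -4 * hY'
  refine ⟨?_, by rw [eq_div_iff hκ, mul_comm, hY2]⟩
  simp only [criticalCubic, IsRoot.def, eval_add, eval_mul, eval_pow, eval_C, eval_X]
  linear_combination 4 * κ * hX' + X * hY2

/-- For 0 < κ < 1, the planar Hamiltonian H has at most six critical points
    (X,Y) with Y ≠ 0. -/
theorem stmt_7 (δ ε κ Ω₂ A : ℝ) (hκ0 : 0 < κ) (hκ1 : κ < 1)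
    (hΩ₂ : Ω₂ = -(1 + 3 * κ) / 8) (hA : A = (1 - κ) / 16)
    (H : ℝ → ℝ → ℝ)
    (hH : ∀ X Y : ℝ, H X Y =
      δ / 2 * (X ^ 2 + Y ^ 2) + Ω₂ / 8 * (X ^ 2 + Y ^ 2) ^ 2 +
        A / 4 * (X ^ 4 - 6 * X ^ 2 * Y ^ 2 + Y ^ 4) + ε / 2 * X) :
    ∃ S : Finset (ℝ × ℝ), S.card ≤ 6 ∧
      ∀ q : ℝ × ℝ, q.2 ≠ 0 →
        deriv (fun x : ℝ => H x q.2) q.1 = 0 →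
        deriv (fun y : ℝ => H q.1 y) q.2 = 0 → q ∈ S := by
  obtain rfl : H = hamiltonian δ ε Ω₂ A := funext₂ hH
  subst hΩ₂ hA
  have hκ2 : κ ^ 2 ≠ 1 := by nlinarith
  obtain ⟨S, hS, hmem⟩ := exists_finset_card_le_two_mul_natDegree_of_sq_eq
    (criticalCubic_ne_zero δ ε hκ2) fun x => (4 * δ - x ^ 2) / κ
  refine ⟨S, by rwa [natDegree_criticalCubic δ ε hκ2] at hS, fun q hY hX' hY' => ?_⟩
  obtain ⟨hroot, hsq⟩ := criticalCubic_isRoot_and_sq_eq_of_deriv_eq_zero hκ0.ne' hY hX' hY'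
  exact hmem q hroot hsq
end
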